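/- (Necessity, odd case.) Let k ≥ 0 be a natural number, let ε > 0, and let μ be a Borel probability measure on ℝ with μ([-ε,ε]) = 1. Define t_j = ∫ y^j dμ(y) for j = 0, 1, …, 2k+1 (so t_0 = 1). Then the matrix ε·M(0, 2k, t) − M(1, 2k+1, t) is positive semidefinite and the matrix M(1, 2k+1, t) + ε·M(0, 2k, t) is positive semidefinite. -/

import Mathlib

/-!
For a moment sequence `t` of `μ`, the quadratic form of `c • M(0, 2k, t) + d • M(1, 2k+1, t)`
at `x` is `∫ (c + d y) p(y)² dμ` with `p(y) = ∑ xᵢ yⁱ`. When `μ` lives on `[-ε, ε]` the weights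
`ε - y` and `ε + y` are nonnegative `μ`-a.e., so both matrices of the theorem are positive
semidefinite.
-/

open MeasureTheory Matrix

/-- The Hankel matrix `M(k, k+2h, t)`: the `(h+1) × (h+1)` matrix whose `(i,j)` entry
is `t (k + i + j)`. -/
def hankel (t : ℕ → ℝ) (k h : ℕ) : Matrix (Fin (h + 1)) (Fin (h + 1)) ℝ :=
  Matrix.of fun i j => t (k + (i : ℕ) + (j : ℕ))

lemma hankel_isHermitian (t : ℕ → ℝ) (k h : ℕ) : (hankel t k h).IsHermitian := by
  ext i j
  simp only [hankel, conjTranspose_apply, of_apply, star_trivial]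
  congr 1
  omega

lemma dotProduct_hankel_mulVec (t : ℕ → ℝ) (k h : ℕ) (x : Fin (h + 1) → ℝ) :
    x ⬝ᵥ hankel t k h *ᵥ x = ∑ i, ∑ j, x i * x j * t (k + i + j) := by
  simp only [dotProduct, mulVec, hankel, of_apply, Finset.mul_sum]
  refine Finset.sum_congr rfl fun i _ => Finset.sum_congr rfl fun j _ => ?_
  ring

lemma pow_mul_sq_sum_eq {n : ℕ} (k : ℕ) (x : Fin n → ℝ) (y : ℝ) :
    y ^ k * (∑ i, x i * y ^ (i : ℕ)) ^ 2 = ∑ i, ∑ j, x i * x j * y ^ (k + i + j) := by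
  rw [sq, Finset.sum_mul_sum, Finset.mul_sum]
  refine Finset.sum_congr rfl fun i _ => ?_
  rw [Finset.mul_sum]
  refine Finset.sum_congr rfl fun j _ => ?_
  ring

lemma integrable_pow_of_ae_mem_Icc {μ : Measure ℝ} [IsFiniteMeasure μ] {ε : ℝ}
    (hμ : ∀ᵐ y ∂μ, y ∈ Set.Icc (-ε) ε) (n : ℕ) : Integrable (fun y => y ^ n) μ := by
  refine .of_bound (by fun_prop) (ε ^ n) ?_
  filter_upwards [hμ] with y hy
  rw [Real.norm_eq_abs, abs_pow]
  exact pow_le_pow_left₀ (abs_nonneg y) (abs_le.2 hy) n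

section MomentSequence

variable {μ : Measure ℝ} (hint : ∀ j : ℕ, Integrable (fun y => y ^ j) μ)
include hint

lemma integrable_pow_mul_sq_sum {n : ℕ} (k : ℕ) (x : Fin n → ℝ) :
    Integrable (fun y => y ^ k * (∑ i, x i * y ^ (i : ℕ)) ^ 2) μ := by
  simp only [pow_mul_sq_sum_eq]
  exact integrable_finsetSum _ fun i _ =>
    integrable_finsetSum _ fun j _ => (hint _).const_mul _

lemma dotProduct_hankel_mulVec_eq_integral {t : ℕ → ℝ} {k h : ℕ}
    (ht : ∀ j, j ≤ k + 2 * h → t j = ∫ y, y ^ j ∂μ) (x : Fin (h + 1) → ℝ) :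
    x ⬝ᵥ hankel t k h *ᵥ x = ∫ y, y ^ k * (∑ i, x i * y ^ (i : ℕ)) ^ 2 ∂μ := by
  simp only [dotProduct_hankel_mulVec, pow_mul_sq_sum_eq]
  rw [integral_finsetSum _ fun i _ =>
    integrable_finsetSum _ fun j _ => (hint _).const_mul _]
  refine Finset.sum_congr rfl fun i _ => ?_
  rw [integral_finsetSum _ fun j _ => (hint _).const_mul _]
  refine Finset.sum_congr rfl fun j _ => ?_
  rw [integral_const_mul, ht _ (by omega)]

lemma posSemidef_smul_hankel_add_smul_hankel {t : ℕ → ℝ} {h : ℕ}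
    (ht : ∀ j, j ≤ 2 * h + 1 → t j = ∫ y, y ^ j ∂μ) {c d : ℝ}
    (hcd : ∀ᵐ y ∂μ, 0 ≤ c + d * y) :
    (c • hankel t 0 h + d • hankel t 1 h).PosSemidef := by
  refine posSemidef_iff_dotProduct_mulVec.2
    ⟨((hankel_isHermitian t 0 h).smul (.all c)).add ((hankel_isHermitian t 1 h).smul (.all d)),
      fun x => ?_⟩
  set p : ℝ → ℝ := fun y => ∑ i, x i * y ^ (i : ℕ)
  have hform : star x ⬝ᵥ (c • hankel t 0 h + d • hankel t 1 h) *ᵥ x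
      = ∫ y, (c + d * y) * p y ^ 2 ∂μ := by
    rw [star_trivial, add_mulVec, smul_mulVec, smul_mulVec, dotProduct_add, dotProduct_smul,
      dotProduct_smul, dotProduct_hankel_mulVec_eq_integral hint (fun j hj => ht j (by omega)),
      dotProduct_hankel_mulVec_eq_integral hint (fun j hj => ht j (by omega)), smul_eq_mul,
      smul_eq_mul, ← integral_const_mul, ← integral_const_mul,
      ← integral_add ((integrable_pow_mul_sq_sum hint 0 x).const_mul c)
        ((integrable_pow_mul_sq_sum hint 1 x).const_mul d)]
    congr 1 with y
    simp only [p, pow_zero, pow_one]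
    ring
  rw [hform]
  exact integral_nonneg_of_ae <| hcd.mono fun y hy => mul_nonneg hy (sq_nonneg _)

end MomentSequence

theorem moment_matrices_posSemidef_odd_general (k : ℕ) (ε : ℝ)
    (μ : Measure ℝ) [IsProbabilityMeasure μ] (hμ : μ (Set.Icc (-ε) ε) = 1)
    (t : ℕ → ℝ) (ht : ∀ j, j ≤ 2 * k + 1 → t j = ∫ y, y ^ j ∂μ) :
    (ε • hankel t 0 k - hankel t 1 k).PosSemidef ∧
      (hankel t 1 k + ε • hankel t 0 k).PosSemidef := by
  have hsupp : ∀ᵐ y ∂μ, y ∈ Set.Icc (-ε) ε :=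
    (ae_mem_iff_measure_eq measurableSet_Icc.nullMeasurableSet).2 (by rw [hμ, measure_univ])
  have hint := integrable_pow_of_ae_mem_Icc hsupp
  constructor
  · have hweight : ∀ᵐ y ∂μ, 0 ≤ ε + -1 * y := hsupp.mono fun y hy => by linarith [hy.2]
    simpa [sub_eq_add_neg] using posSemidef_smul_hankel_add_smul_hankel hint ht hweight
  · have hweight : ∀ᵐ y ∂μ, 0 ≤ ε + 1 * y := hsupp.mono fun y hy => by linarith [hy.1]
    simpa [add_comm] using posSemidef_smul_hankel_add_smul_hankel hint ht hweight

/-- Necessity in the truncated moment problem on `[-ε, ε]`, odd case. -/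
theorem moment_matrices_posSemidef_odd (k : ℕ) (ε : ℝ) (hε : 0 < ε)
    (μ : Measure ℝ) [IsProbabilityMeasure μ] (hμ : μ (Set.Icc (-ε) ε) = 1)
    (t : ℕ → ℝ) (ht : ∀ j, j ≤ 2 * k + 1 → t j = ∫ y, y ^ j ∂μ) :
    (ε • hankel t 0 k - hankel t 1 k).PosSemidef ∧
      (hankel t 1 k + ε • hankel t 0 k).PosSemidef :=
  moment_matrices_posSemidef_odd_general k ε μ hμ t ht
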